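/- The axiom SP2 is not sound for ready simulation equivalence when there are at least three distinct actions: for distinct actions a, b, c, the process a.0 ‖ (b.0 + c.0) is not ready simulation equivalent to a.0 ‖ b.0 + a.0 ‖ c.0 + a.0 ‖ (b.0 + c.0). -/

import Mathlib

inductive Proc (A : Type) : Type where
  | nil : Proc A
  | pre : A → Proc A → Proc A
  | add : Proc A → Proc A → Proc A
  | par : Proc A → Proc A → Proc A

inductive Step {A : Type} : Proc A → A → Proc A → Prop where
  | pre (a : A) (p : Proc A) : Step (.pre a p) a p
  | addL {p : Proc A} {a : A} {p' : Proc A} (q : Proc A) :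
      Step p a p' → Step (.add p q) a p'
  | addR {q : Proc A} {a : A} {q' : Proc A} (p : Proc A) :
      Step q a q' → Step (.add p q) a q'
  | parL {p : Proc A} {a : A} {p' : Proc A} (q : Proc A) :
      Step p a p' → Step (.par p q) a (.par p' q)
  | parR {q : Proc A} {a : A} {q' : Proc A} (p : Proc A) :
      Step q a q' → Step (.par p q) a (.par p q')

inductive TraceTo {A : Type} : Proc A → List A → Proc A → Prop where
  | refl (p : Proc A) : TraceTo p [] p
  | step {p : Proc A} {a : A} {p' : Proc A} {α : List A} {q : Proc A} :
      Step p a p' → TraceTo p' α q → TraceTo p (a :: α) q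

def traces {A : Type} (p : Proc A) : Set (List A) := {α | ∃ q, TraceTo p α q}

def stuck {A : Type} (p : Proc A) : Prop := ∀ (a : A) (q : Proc A), ¬ Step p a q

def ctraces {A : Type} (p : Proc A) : Set (List A) :=
  {α | ∃ q, TraceTo p α q ∧ stuck q}

def initials {A : Type} (p : Proc A) : Set A := {a | ∃ p', Step p a p'}

def IsSimulation {A : Type} (R : Proc A → Proc A → Prop) : Prop :=
  ∀ p q, R p q → ∀ (a : A) (p' : Proc A), Step p a p' → ∃ q', Step q a q' ∧ R p' q'

def SimEquiv {A : Type} (p q : Proc A) : Prop :=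
  (∃ R, IsSimulation R ∧ R p q) ∧ (∃ R, IsSimulation R ∧ R q p)

def IsReadySimulation {A : Type} (R : Proc A → Proc A → Prop) : Prop :=
  IsSimulation R ∧ ∀ p q, R p q → initials p = initials q

def RSEquiv {A : Type} (p q : Proc A) : Prop :=
  (∃ R, IsReadySimulation R ∧ R p q) ∧ (∃ R, IsReadySimulation R ∧ R q p)

def IsCompletedSimulation {A : Type} (R : Proc A → Proc A → Prop) : Prop :=
  IsSimulation R ∧ ∀ p q, R p q → stuck p → stuck q

def CSEquiv {A : Type} (p q : Proc A) : Prop :=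
  (∃ R, IsCompletedSimulation R ∧ R p q) ∧ (∃ R, IsCompletedSimulation R ∧ R q p)

def Bisim {A : Type} (p q : Proc A) : Prop :=
  ∃ R, (∀ x y, R x y → R y x) ∧ IsSimulation R ∧ R p q

noncomputable def depth {A : Type} (p : Proc A) : ℕ :=
  sSup (List.length '' ctraces p)

noncomputable def norm {A : Type} (p : Proc A) : ℕ :=
  sInf (List.length '' ctraces p)


/-! The right-hand side can commit to `b` by performing `a` (to `0 ‖ b.0`); the left-hand side
cannot follow with the same ready set, since its only `a`-derivative `0 ‖ (b.0 + c.0)` is still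
ready for both `b` and `c`. -/

namespace Step

variable {A : Type}

theorem pre_iff {a b : A} {p q : Proc A} : Step (.pre a p) b q ↔ b = a ∧ q = p := by
  constructor
  · rintro ⟨⟩
    exact ⟨rfl, rfl⟩
  · rintro ⟨rfl, rfl⟩
    exact .pre _ _

theorem add_iff {p q r : Proc A} {a : A} : Step (.add p q) a r ↔ Step p a r ∨ Step q a r := by
  constructor
  · intro h
    cases h with
    | addL _ h => exact .inl h
    | addR _ h => exact .inr h
  · rintro (h | h)
    exacts [.addL q h, .addR p h]

theorem par_iff {p q r : Proc A} {a : A} :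
    Step (.par p q) a r ↔
      (∃ p', Step p a p' ∧ r = .par p' q) ∨ ∃ q', Step q a q' ∧ r = .par p q' := by
  constructor
  · intro h
    cases h with
    | parL _ h => exact .inl ⟨_, h, rfl⟩
    | parR _ h => exact .inr ⟨_, h, rfl⟩
  · rintro (⟨p', h, rfl⟩ | ⟨q', h, rfl⟩)
    exacts [.parL q h, .parR p h]

end Step

section initials

variable {A : Type}

@[simp]
theorem initials_nil : initials (.nil : Proc A) = ∅ := by
  ext a
  exact ⟨(fun ⟨_, h⟩ => nomatch h), False.elim⟩

@[simp]
theorem initials_pre (a : A) (p : Proc A) : initials (.pre a p) = {a} := by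
  ext b
  simp [initials, Step.pre_iff]

@[simp]
theorem initials_add (p q : Proc A) : initials (.add p q) = initials p ∪ initials q := by
  ext a
  simp [initials, Step.add_iff, exists_or]

@[simp]
theorem initials_par (p q : Proc A) : initials (.par p q) = initials p ∪ initials q := by
  ext a
  simp [initials, Step.par_iff, exists_or]

end initials

theorem Step.eq_par_of_par_pre {A : Type} {a : A} {p q r : Proc A} (ha : a ∉ initials q)
    (h : Step (.par (.pre a p) q) a r) : r = .par p q := by
  rcases Step.par_iff.mp h with ⟨p', hp, rfl⟩ | ⟨q', hq, -⟩
  · rw [(Step.pre_iff.mp hp).2]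
  · exact absurd ⟨q', hq⟩ ha

theorem IsReadySimulation.exists_step_initials_eq {A : Type} {R : Proc A → Proc A → Prop}
    (hR : IsReadySimulation R) {p q p' : Proc A} {a : A} (hpq : R p q) (h : Step p a p') :
    ∃ q', Step q a q' ∧ initials p' = initials q' :=
  let ⟨q', hq, hpq'⟩ := hR.1 p q hpq a p' h
  ⟨q', hq, hR.2 p' q' hpq'⟩

theorem SP2_not_sound_RS_general {A : Type}
    (a b c : A) (hab : a ≠ b) (hac : a ≠ c) (hbc : b ≠ c) :
    ¬ RSEquiv
      (Proc.par (Proc.pre a Proc.nil)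
                (Proc.add (Proc.pre b Proc.nil) (Proc.pre c Proc.nil)))
      (Proc.add (Proc.add
        (Proc.par (Proc.pre a Proc.nil) (Proc.pre b Proc.nil))
        (Proc.par (Proc.pre a Proc.nil) (Proc.pre c Proc.nil)))
        (Proc.par (Proc.pre a Proc.nil)
                  (Proc.add (Proc.pre b Proc.nil) (Proc.pre c Proc.nil)))) := by
  rintro ⟨-, R, hR, hrel⟩
  obtain ⟨q', hstep, hinit⟩ :=
    hR.exists_step_initials_eq hrel (.addL _ (.addL _ (.parL _ (.pre a .nil))))
  have ha : a ∉ initials (Proc.add (.pre b .nil) (.pre c .nil)) := by simp [hab, hac]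
  rw [hstep.eq_par_of_par_pre ha] at hinit
  simp only [initials_par, initials_add, initials_pre, initials_nil, Set.empty_union] at hinit
  have hc : c ∈ ({b} : Set A) := hinit ▸ Set.mem_union_right _ rfl
  exact hbc hc.symm

theorem SP2_not_sound_RS {A : Type} [Fintype A] [Nonempty A]
    (a b c : A) (hab : a ≠ b) (hac : a ≠ c) (hbc : b ≠ c) :
    ¬ RSEquiv
      (Proc.par (Proc.pre a Proc.nil)
                (Proc.add (Proc.pre b Proc.nil) (Proc.pre c Proc.nil)))
      (Proc.add (Proc.add
        (Proc.par (Proc.pre a Proc.nil) (Proc.pre b Proc.nil))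
        (Proc.par (Proc.pre a Proc.nil) (Proc.pre c Proc.nil)))
        (Proc.par (Proc.pre a Proc.nil)
                  (Proc.add (Proc.pre b Proc.nil) (Proc.pre c Proc.nil)))) :=
  SP2_not_sound_RS_general a b c hab hac hbc
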